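/- Let v_1, …, v_d be LDP fan data with d ≥ 4 and exactly two singular cones. Then there is a chain of LDP fan data of lengths d, d−1, …, 4, each with exactly two singular cones, starting from the given data, in which each data of length m (5 ≤ m ≤ d) contains an index k with v_k = v_{k−1} + v_{k+1} and det(v_{k−1}, v_k) = det(v_k, v_{k+1}) = 1, and the data of length m−1 is obtained by deleting v_k. (Equivalently, X(Δ) is obtained from a toric log del Pezzo surface of Picard number two by a sequence of blow-ups at nonsingular torus-fixed points, all intermediate surfaces being log del Pezzo.) -/

import Mathlib

/-- The determinant `det(u, w) = u₁w₂ − u₂w₁` of two integer vectors. -/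
def detZ (u w : ℤ × ℤ) : ℤ := u.1 * w.2 - u.2 * w.1

/-- The real vector associated to an integer vector. -/
noncomputable def toR2 (u : ℤ × ℤ) : ℝ × ℝ := ((u.1 : ℝ), (u.2 : ℝ))

/-- The cone `ℝ_{≥0} u + ℝ_{≥0} w` spanned by two integer vectors. -/
def coneOf (u w : ℤ × ℤ) : Set (ℝ × ℝ) :=
  {x | ∃ a b : ℝ, 0 ≤ a ∧ 0 ≤ b ∧ x = a • toR2 u + b • toR2 w}

/-- Complete fan data of length `d`: a cyclic sequence of primitive integer vectors with
`det(v_i, v_{i+1}) ≥ 1` whose successive cones cover `ℝ²` and have pairwise disjoint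
interiors. -/
def IsCompleteFanData (d : ℕ) (v : ZMod d → ℤ × ℤ) : Prop :=
  3 ≤ d ∧
  (∀ i, Int.gcd (v i).1 (v i).2 = 1) ∧
  (∀ i, 1 ≤ detZ (v i) (v (i + 1))) ∧
  (⋃ i, coneOf (v i) (v (i + 1))) = Set.univ ∧
  ∀ i j, i ≠ j →
    interior (coneOf (v i) (v (i + 1))) ∩ interior (coneOf (v j) (v (j + 1))) = ∅

/-- `f(i) = det(v_{i−1}, v_i) + det(v_i, v_{i+1}) + det(v_{i+1}, v_{i−1})`. -/
def fanF (d : ℕ) (v : ZMod d → ℤ × ℤ) (i : ZMod d) : ℤ :=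
  detZ (v (i - 1)) (v i) + detZ (v i) (v (i + 1)) + detZ (v (i + 1)) (v (i - 1))

/-- LDP fan data: complete fan data with `f(i) ≥ 1` for all `i`. -/
def IsLDPFanData (d : ℕ) (v : ZMod d → ℤ × ℤ) : Prop :=
  IsCompleteFanData d v ∧ ∀ i, 1 ≤ fanF d v i

/-- The number of singular cones, i.e. indices `i` with `det(v_i, v_{i+1}) ≥ 2`. -/
noncomputable def numSingular (d : ℕ) (v : ZMod d → ℤ × ℤ) : ℕ :=
  {i : ZMod d | 2 ≤ detZ (v i) (v (i + 1))}.ncard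

/-- Equivalence of fan data: some `GL(2, ℤ)` matrix maps the vector set of one
bijectively onto the vector set of the other. -/
def FanEquiv {d₁ d₂ : ℕ} (v : ZMod d₁ → ℤ × ℤ) (w : ZMod d₂ → ℤ × ℤ) : Prop :=
  ∃ M : Matrix (Fin 2) (Fin 2) ℤ, IsUnit M.det ∧
    (fun u : ℤ × ℤ => (M 0 0 * u.1 + M 0 1 * u.2, M 1 0 * u.1 + M 1 1 * u.2)) ''
      Set.range v = Set.range w

/-- The cyclic sequence of length `d − 1` obtained by deleting the vector `v_k`:
it lists `v_{k+1}, v_{k+2}, …, v_{k+d−1}`. -/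
def deleteAt {d : ℕ} (v : ZMod d → ℤ × ℤ) (k : ZMod d) : ZMod (d - 1) → ℤ × ℤ :=
  fun i => v (k + 1 + (i.val : ZMod d))

/-- The cyclic sequence of length `d + 1` obtained by inserting `v_k + v_{k+1}`
between `v_k` and `v_{k+1}`. -/
def insertAt {d : ℕ} (v : ZMod d → ℤ × ℤ) (k : ZMod d) : ZMod (d + 1) → ℤ × ℤ :=
  fun i =>
    if i.val ≤ k.val then v ((i.val : ℕ) : ZMod d)
    else if i.val = k.val + 1 then v k + v (k + 1)
    else v ((i.val - 1 : ℕ) : ZMod d)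

/-!
A ray `v_k` between two smooth cones satisfies `v_{k-1} + v_{k+1} = c_k v_k` with
`c_k = det(v_{k-1}, v_{k+1})`, and `f(k) ≥ 1` says `c_k ≤ 1`. If `c_k = 1`, deleting `v_k` merges
the two cones into one smooth cone: the fan stays complete, `f` only grows at the two neighbours
and the singular cones are untouched. So it suffices to find such a ray whenever `d ≥ 5`.

Call `v_k` wide if `det(v_{k-1}, v_{k+1}) ≤ 0`. Then `σ_{k-1} ∪ σ_k` contains a closed half-plane,
so all other rays lie in the opposite one, and for `d ≥ 5` two wide rays must be equal or adjacent.
If no ray can be deleted, every ray between two smooth cones is wide. For `d ≥ 7` at least three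
rays lie between two smooth cones, and no three indices are pairwise adjacent. For `d = 5, 6` the
few remaining configurations are excluded by integer arithmetic in a basis adapted to a wide ray.
-/

lemma detZ_anticomm (u w : ℤ × ℤ) : detZ w u = -detZ u w := by
  simp only [detZ]; ring

@[simp] lemma detZ_self (u : ℤ × ℤ) : detZ u u = 0 := by
  simp only [detZ]; ring

lemma detZ_neg_left (u w : ℤ × ℤ) : detZ (-u) w = -detZ u w := by
  simp only [detZ, Prod.fst_neg, Prod.snd_neg]; ring

lemma detZ_add_left (u u' w : ℤ × ℤ) : detZ (u + u') w = detZ u w + detZ u' w := by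
  simp only [detZ, Prod.fst_add, Prod.snd_add]; ring

lemma detZ_add_right (u w w' : ℤ × ℤ) : detZ u (w + w') = detZ u w + detZ u w' := by
  simp only [detZ, Prod.fst_add, Prod.snd_add]; ring

lemma detZ_smul_left (u w : ℤ × ℤ) (n : ℤ) : detZ (n • u) w = n * detZ u w := by
  simp only [detZ, Prod.smul_fst, Prod.smul_snd, smul_eq_mul]; ring

lemma detZ_smul_right (u w : ℤ × ℤ) (n : ℤ) : detZ u (n • w) = n * detZ u w := by
  simp only [detZ, Prod.smul_fst, Prod.smul_snd, smul_eq_mul]; ring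

lemma eq_add_of_detZ_eq_one {a b c : ℤ × ℤ} (hab : detZ a b = 1) (hbc : detZ b c = 1)
    (hac : detZ a c = 1) : b = a + c := by
  simp only [detZ] at hab hbc hac
  ext <;> simp only [Prod.fst_add, Prod.snd_add]
  · linear_combination (-b.1) * hac + a.1 * hbc + c.1 * hab
  · linear_combination (-b.2) * hac + a.2 * hbc + c.2 * hab

lemma detZ_eq_zero_of_detZ_eq_zero {a u w : ℤ × ℤ} (ha : a ≠ 0) (hu : detZ a u = 0)
    (hw : detZ a w = 0) : detZ u w = 0 := by
  have h₁ : a.1 * detZ u w = u.1 * detZ a w - w.1 * detZ a u := by simp only [detZ]; ring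
  have h₂ : a.2 * detZ u w = u.2 * detZ a w - w.2 * detZ a u := by simp only [detZ]; ring
  rw [hu, hw] at h₁ h₂
  by_contra h
  exact ha (Prod.ext (by simpa [h] using h₁) (by simpa [h] using h₂))

lemma ne_zero_of_gcd_eq_one {u : ℤ × ℤ} (hu : Int.gcd u.1 u.2 = 1) : u ≠ 0 := by
  rintro rfl
  simp at hu

lemma eq_or_eq_neg_of_detZ_eq_zero {u w : ℤ × ℤ} (hu : Int.gcd u.1 u.2 = 1)
    (hw : Int.gcd w.1 w.2 = 1) (h : detZ u w = 0) : w = u ∨ w = -u := by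
  obtain ⟨a, b, hab⟩ := Int.isCoprime_iff_gcd_eq_one.2 hu
  set c := a * w.1 + b * w.2
  have h' : u.1 * w.2 - u.2 * w.1 = 0 := h
  have hw₁ : w.1 = c * u.1 := by linear_combination (-w.1) * hab + (-b) * h'
  have hw₂ : w.2 = c * u.2 := by linear_combination (-w.2) * hab + a * h'
  have hc : c.natAbs = 1 := by
    have := Int.gcd_mul_left c u.1 u.2
    rwa [← hw₁, ← hw₂, hw, hu, mul_one, eq_comm] at this
  rcases Int.natAbs_eq_iff.1 hc with hc | hc <;> [left; right] <;>
    ext <;> simp [hw₁, hw₂, hc]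

/-- The coordinates of `u` in a basis `(a, b)` of `ℤ²` with `det(a, b) = 1`. -/
def toBasis (a b u : ℤ × ℤ) : ℤ × ℤ := (detZ u b, detZ a u)

section toBasis

variable {a b : ℤ × ℤ} (hab : detZ a b = 1)
include hab

lemma detZ_toBasis (u w : ℤ × ℤ) : detZ (toBasis a b u) (toBasis a b w) = detZ u w := by
  have key : detZ (toBasis a b u) (toBasis a b w) = detZ u w * detZ a b := by
    simp only [toBasis, detZ]; ring
  rw [key, hab, mul_one]

lemma toBasis_left : toBasis a b a = (1, 0) := by
  simp [toBasis, hab]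

lemma toBasis_right : toBasis a b b = (0, 1) := by
  simp [toBasis, hab]

lemma gcd_toBasis {u : ℤ × ℤ} (hu : Int.gcd u.1 u.2 = 1) :
    Int.gcd (toBasis a b u).1 (toBasis a b u).2 = 1 := by
  obtain ⟨s, t, hst⟩ := Int.isCoprime_iff_gcd_eq_one.2 hu
  refine Int.isCoprime_iff_gcd_eq_one.1 ⟨s * a.1 + t * a.2, s * b.1 + t * b.2, ?_⟩
  simp only [toBasis, detZ] at hab ⊢
  linear_combination (s * u.1 + t * u.2) * hab + hst

end toBasis

lemma exists_standard_coords {ι : Type*} (w : ι → ℤ × ℤ) {a b : ι} (h : detZ (w a) (w b) = 1) :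
    ∃ w' : ι → ℤ × ℤ, w' a = (1, 0) ∧ w' b = (0, 1) ∧
      (∀ i j, detZ (w' i) (w' j) = detZ (w i) (w j)) ∧
      ∀ i, Int.gcd (w i).1 (w i).2 = 1 → Int.gcd (w' i).1 (w' i).2 = 1 :=
  ⟨fun i => toBasis (w a) (w b) (w i), toBasis_left h, toBasis_right h,
    fun _ _ => detZ_toBasis h _ _, fun _ => gcd_toBasis h⟩

def detR (x y : ℝ × ℝ) : ℝ := x.1 * y.2 - x.2 * y.1

@[simp] lemma detR_toR2 (u w : ℤ × ℤ) : detR (toR2 u) (toR2 w) = detZ u w := by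
  simp [detR, toR2, detZ]

@[fun_prop] lemma continuous_detR : Continuous fun p : (ℝ × ℝ) × (ℝ × ℝ) => detR p.1 p.2 := by
  unfold detR; fun_prop

lemma mem_coneOf_iff {u w : ℤ × ℤ} (h : 0 < detZ u w) {x : ℝ × ℝ} :
    x ∈ coneOf u w ↔ 0 ≤ detR (toR2 u) x ∧ 0 ≤ detR x (toR2 w) := by
  have hD : (0 : ℝ) < detZ u w := by exact_mod_cast h
  constructor
  · rintro ⟨a, b, ha, hb, rfl⟩
    have h₁ : detR (toR2 u) (a • toR2 u + b • toR2 w) = b * detZ u w := by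
      simp [detR, toR2, detZ]; ring
    have h₂ : detR (a • toR2 u + b • toR2 w) (toR2 w) = a * detZ u w := by
      simp [detR, toR2, detZ]; ring
    rw [h₁, h₂]
    exact ⟨by positivity, by positivity⟩
  · rintro ⟨h₁, h₂⟩
    refine ⟨detR x (toR2 w) / detZ u w, detR (toR2 u) x / detZ u w,
      by positivity, by positivity, ?_⟩
    have key : (detZ u w : ℝ) • x = detR x (toR2 w) • toR2 u + detR (toR2 u) x • toR2 w := by
      ext <;> simp [detR, toR2, detZ] <;> ring
    calc x = (detZ u w : ℝ)⁻¹ • ((detZ u w : ℝ) • x) := (inv_smul_smul₀ hD.ne' x).symm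
      _ = _ := by rw [key, smul_add, smul_smul, smul_smul, div_eq_inv_mul, div_eq_inv_mul]

lemma isClosed_coneOf {u w : ℤ × ℤ} (h : 0 < detZ u w) : IsClosed (coneOf u w) := by
  rw [show coneOf u w = {x | 0 ≤ detR (toR2 u) x} ∩ {x | 0 ≤ detR x (toR2 w)} from
    Set.ext fun x => mem_coneOf_iff h]
  exact (isClosed_le continuous_const (by fun_prop)).inter
    (isClosed_le continuous_const (by fun_prop))

lemma mem_interior_coneOf {u w : ℤ × ℤ} (h : 0 < detZ u w) {x : ℝ × ℝ}
    (hu : 0 < detR (toR2 u) x) (hw : 0 < detR x (toR2 w)) : x ∈ interior (coneOf u w) := by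
  refine interior_maximal (t := {y | 0 < detR (toR2 u) y} ∩ {y | 0 < detR y (toR2 w)})
    (fun y hy => (mem_coneOf_iff h).2 ⟨hy.1.le, hy.2.le⟩) ?_ ⟨hu, hw⟩
  exact (isOpen_lt continuous_const (by fun_prop)).inter (isOpen_lt continuous_const (by fun_prop))

lemma coneOf_eq_union {a b c : ℤ × ℤ} (h : b = a + c) :
    coneOf a c = coneOf a b ∪ coneOf b c := by
  have hb : toR2 b = toR2 a + toR2 c := by simp [toR2, h]
  ext x
  constructor
  · rintro ⟨α, γ, hα, hγ, rfl⟩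
    rcases le_total γ α with hle | hle
    · exact Or.inl ⟨α - γ, γ, by linarith, hγ, by rw [hb]; module⟩
    · exact Or.inr ⟨α, γ - α, hα, by linarith, by rw [hb]; module⟩
  · rintro (⟨α, β, hα, hβ, rfl⟩ | ⟨β, γ, hβ, hγ, rfl⟩)
    · exact ⟨α + β, β, by linarith, hβ, by rw [hb]; module⟩
    · exact ⟨β, β + γ, hβ, by linarith, by rw [hb]; module⟩

lemma halfPlane_subset_coneOf_union {a b c : ℤ × ℤ} (hab : 0 < detZ a b) (hbc : 0 < detZ b c)
    (hac : detZ a c ≤ 0) : {x | 0 ≤ detR (toR2 a) x} ⊆ coneOf a b ∪ coneOf b c := by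
  intro x hx
  rw [Set.mem_union, mem_coneOf_iff hab, mem_coneOf_iff hbc]
  by_cases hxb : 0 ≤ detR x (toR2 b)
  · exact Or.inl ⟨hx, hxb⟩
  have hbx : detR (toR2 b) x = -detR x (toR2 b) := by simp only [detR]; ring
  have key : detR x (toR2 c) * detZ a b =
      detR x (toR2 b) * detZ a c + detR (toR2 a) x * detZ b c := by
    simp [detR, toR2, detZ]; ring
  have hab' : (0 : ℝ) < detZ a b := by exact_mod_cast hab
  have hbc' : (0 : ℝ) < detZ b c := by exact_mod_cast hbc
  have hac' : (detZ a c : ℝ) ≤ 0 := by exact_mod_cast hac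
  refine Or.inr ⟨by linarith, ?_⟩
  nlinarith [mul_nonneg hx hbc'.le, mul_nonneg_of_nonpos_of_nonpos (not_le.1 hxb).le hac']

lemma Set.Nonempty.inter_interior_of_subset_union {X : Type*} [TopologicalSpace X]
    {U A B : Set X} (hne : U.Nonempty) (hU : IsOpen U) (hA : IsClosed A) (h : U ⊆ A ∪ B) :
    (U ∩ interior A).Nonempty ∨ (U ∩ interior B).Nonempty := by
  by_cases hUA : U ⊆ A
  · exact Or.inl (by rwa [Set.inter_eq_left.2 (interior_maximal hUA hU)])
  obtain ⟨x, hxU, hxA⟩ := Set.not_subset.1 hUA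
  refine Or.inr ⟨x, hxU, interior_maximal (t := U ∩ Aᶜ) ?_ (hU.inter hA.isOpen_compl) ⟨hxU, hxA⟩⟩
  exact fun y hy => (h hy.1).resolve_left hy.2

namespace IsCompleteFanData

variable {m : ℕ} {v : ZMod m → ℤ × ℤ}

lemma gcd_eq_one (hv : IsCompleteFanData m v) (i : ZMod m) : Int.gcd (v i).1 (v i).2 = 1 :=
  hv.2.1 i

lemma detZ_pos (hv : IsCompleteFanData m v) (i : ZMod m) : 0 < detZ (v i) (v (i + 1)) :=
  hv.2.2.1 i

lemma detZ_sub_one_pos (hv : IsCompleteFanData m v) (k : ZMod m) :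
    0 < detZ (v (k - 1)) (v k) := by
  simpa using hv.detZ_pos (k - 1)

lemma interior_inter_interior (hv : IsCompleteFanData m v) {i j : ZMod m} (hij : i ≠ j) :
    interior (coneOf (v i) (v (i + 1))) ∩ interior (coneOf (v j) (v (j + 1))) = ∅ :=
  hv.2.2.2.2 i j hij

lemma false_of_subset_union (hv : IsCompleteFanData m v) {U : Set (ℝ × ℝ)} (hU : IsOpen U)
    (hne : U.Nonempty) {j k : ZMod m} (hj₁ : j ≠ k - 1) (hj₂ : j ≠ k)
    (hUj : U ⊆ interior (coneOf (v j) (v (j + 1))))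
    (hUk : U ⊆ coneOf (v (k - 1)) (v k) ∪ coneOf (v k) (v (k + 1))) : False := by
  rcases hne.inter_interior_of_subset_union hU (isClosed_coneOf (hv.detZ_sub_one_pos k)) hUk
    with ⟨x, hxU, hx⟩ | ⟨x, hxU, hx⟩
  · have := hv.interior_inter_interior hj₁.symm
    rw [sub_add_cancel] at this
    exact this.subset ⟨hx, hUj hxU⟩
  · exact (hv.interior_inter_interior hj₂.symm).subset ⟨hx, hUj hxU⟩

lemma detZ_le_zero_of_wide (hv : IsCompleteFanData m v) {k : ZMod m}
    (hk : detZ (v (k - 1)) (v (k + 1)) ≤ 0) {j : ZMod m} (hj : j ≠ k) :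
    detZ (v (k - 1)) (v j) ≤ 0 := by
  obtain rfl | hj₁ := eq_or_ne j (k - 1)
  · simp
  by_contra! hpos
  set a := v (k - 1)
  set d := detZ a (v (j + 1))
  -- an integer point inside `σ_j` on the positive side of the line through `a`
  set N := |d| + 1
  set p := N • v j + v (j + 1)
  have hN : 0 < N := by positivity
  have hjp : 0 < detZ (v j) p := by
    rw [detZ_add_right, detZ_smul_right, detZ_self, mul_zero, zero_add]
    exact hv.detZ_pos j
  have hpj : 0 < detZ p (v (j + 1)) := by
    rw [detZ_add_left, detZ_smul_left, detZ_self, add_zero]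
    exact mul_pos hN (hv.detZ_pos j)
  have hap : 0 < detZ a p := by
    rw [detZ_add_right, detZ_smul_right]
    nlinarith [neg_abs_le d]
  refine hv.false_of_subset_union (U := interior (coneOf (v j) (v (j + 1))) ∩
    {x | 0 < detR (toR2 a) x}) (isOpen_interior.inter (isOpen_lt continuous_const (by fun_prop)))
    ⟨toR2 p, mem_interior_coneOf (hv.detZ_pos j) (by simpa using hjp) (by simpa using hpj),
      show 0 < detR _ _ by simpa using hap⟩ hj₁ hj Set.inter_subset_left fun x hx => ?_
  exact halfPlane_subset_coneOf_union (hv.detZ_sub_one_pos k) (hv.detZ_pos k) hk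
    (show 0 ≤ detR _ x from hx.2.le)

lemma adjacent_of_wide (hv : IsCompleteFanData m v) (hm : 5 ≤ m) {k l : ZMod m}
    (hk : detZ (v (k - 1)) (v (k + 1)) ≤ 0) (hl : detZ (v (l - 1)) (v (l + 1)) ≤ 0) :
    l = k - 1 ∨ l = k ∨ l = k + 1 := by
  by_contra! h
  obtain ⟨h₁, h₂, h₃⟩ := h
  have hkl : detZ (v (k - 1)) (v (l - 1)) = 0 := by
    have hlk := hv.detZ_le_zero_of_wide hl (j := k - 1) fun e => h₁ e.symm
    have hkl := hv.detZ_le_zero_of_wide hk (j := l - 1) fun e => h₃ (by linear_combination e)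
    rw [detZ_anticomm] at hlk
    linarith
  rcases eq_or_eq_neg_of_detZ_eq_zero (hv.gcd_eq_one _) (hv.gcd_eq_one _) hkl with he | he
  · have := hv.detZ_le_zero_of_wide hk h₂
    have := hv.detZ_sub_one_pos l
    rw [he] at this
    linarith
  -- the two opposite half-planes leave no room for a fifth cone
  have : NeZero m := ⟨by omega⟩
  obtain ⟨j, -, hj⟩ := Finset.exists_mem_notMem_of_card_lt_card
    (s := [k - 1, k, l - 1, l].toFinset) (t := Finset.univ)
    ((List.toFinset_card_le _).trans_lt (by simp; omega))
  simp only [List.toFinset_cons, List.toFinset_nil, Finset.mem_insert, Finset.notMem_empty,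
    or_false, not_or] at hj
  obtain ⟨hj₁, hj₂, hj₃, hj₄⟩ := hj
  have hpar : ∀ i, i ≠ k → i ≠ l → detZ (v (k - 1)) (v i) = 0 := by
    intro i hik hil
    have := hv.detZ_le_zero_of_wide hk hik
    have := hv.detZ_le_zero_of_wide hl hil
    rw [he, detZ_neg_left] at this
    linarith
  have := detZ_eq_zero_of_detZ_eq_zero (ne_zero_of_gcd_eq_one (hv.gcd_eq_one (k - 1)))
    (hpar j hj₂ hj₄) (hpar (j + 1) (fun e => hj₁ (by linear_combination e))
      (fun e => hj₃ (by linear_combination e)))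
  linarith [hv.detZ_pos j]

lemma one_le_detZ_of_not_adjacent (hv : IsCompleteFanData m v) (hm : 5 ≤ m) {k l : ZMod m}
    (hk : detZ (v (k - 1)) (v (k + 1)) ≤ 0) (hl : ¬(l = k - 1 ∨ l = k ∨ l = k + 1)) :
    1 ≤ detZ (v (l - 1)) (v (l + 1)) := by
  by_contra h
  exact hl (hv.adjacent_of_wide hm hk (by omega))

lemma interior_coneOf_merge_inter (hv : IsCompleteFanData m v) {k j : ZMod m}
    (hsum : v k = v (k - 1) + v (k + 1)) (hj₁ : j ≠ k - 1) (hj₂ : j ≠ k) :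
    interior (coneOf (v (k - 1)) (v (k + 1))) ∩ interior (coneOf (v j) (v (j + 1))) = ∅ := by
  by_contra hne
  refine hv.false_of_subset_union (isOpen_interior.inter isOpen_interior)
    (Set.nonempty_iff_ne_empty.2 hne) hj₁ hj₂ Set.inter_subset_right ?_
  rw [← coneOf_eq_union hsum]
  exact Set.inter_subset_left.trans interior_subset

lemma comp_add_right (hv : IsCompleteFanData m v) (p : ZMod m) :
    IsCompleteFanData m (fun i => v (i + p)) := by
  obtain ⟨h3, hg, hdet, hcov, hdisj⟩ := hv
  refine ⟨h3, fun i => hg _, fun i => by simpa only [add_right_comm i 1 p] using hdet (i + p), ?_,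
    fun i j hij => by simpa only [add_right_comm _ 1 p] using hdisj _ _ (by simpa using hij)⟩
  simp only [add_right_comm _ 1 p]
  rwa [(add_right_surjective p).iUnion_comp fun j => coneOf (v j) (v (j + 1))]

end IsCompleteFanData

lemma IsLDPFanData.comp_add_right {m : ℕ} {v : ZMod m → ℤ × ℤ}
    (hv : IsLDPFanData m v) (p : ZMod m) : IsLDPFanData m (fun i => v (i + p)) :=
  ⟨hv.1.comp_add_right p, fun i => by
    simpa only [fanF, add_right_comm _ 1 p, sub_add_eq_add_sub] using hv.2 (i + p)⟩

lemma ZMod.val_add_one_of_ne_neg_one {n : ℕ} [NeZero n] {i : ZMod n} (hi : i ≠ -1) :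
    (i + 1).val = i.val + 1 := by
  have : Fact (1 < n) := ⟨by
    by_contra h
    obtain rfl : n = 1 := by have := NeZero.pos n; omega
    exact hi (Subsingleton.elim _ _)⟩
  rw [ZMod.val_add, ZMod.val_one, Nat.mod_eq_of_lt]
  refine lt_of_le_of_ne (ZMod.val_lt i) fun h => hi (eq_neg_of_add_eq_zero_left ?_)
  rw [← ZMod.natCast_zmod_val i, ← Nat.cast_add_one, h, ZMod.natCast_self]

lemma ZMod.val_neg_one_add_one {n : ℕ} [NeZero n] : (-1 : ZMod n).val + 1 = n := by
  obtain ⟨n, rfl⟩ := Nat.exists_eq_succ_of_ne_zero (NeZero.ne n)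
  rw [ZMod.val_neg_one]

lemma ZMod.false_of_pairwise_adjacent {m : ℕ} (hm : 4 ≤ m) {a b c : ZMod m} (hab : a ≠ b)
    (hac : a ≠ c) (hbc : b ≠ c) (h₁ : b = a - 1 ∨ b = a ∨ b = a + 1)
    (h₂ : c = a - 1 ∨ c = a ∨ c = a + 1) (h₃ : c = b - 1 ∨ c = b ∨ c = b + 1) : False := by
  have hne : ∀ n : ℕ, 0 < n → n < m → (n : ZMod m) ≠ 0 := fun n h₀ hn h => by
    have := Nat.le_of_dvd h₀ ((ZMod.natCast_eq_zero_iff n m).1 h)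
    omega
  have h1 := hne 1 (by norm_num) (by omega)
  have h2 := hne 2 (by norm_num) (by omega)
  have h3 := hne 3 (by norm_num) (by omega)
  push_cast at h1 h2 h3
  grind

def deleteIndex {m : ℕ} (k : ZMod m) (i : ZMod (m - 1)) : ZMod m := k + 1 + (i.val : ZMod m)

section deleteAt

variable {m : ℕ} {v : ZMod m → ℤ × ℤ} {k : ZMod m}

lemma deleteAt_apply (i : ZMod (m - 1)) :
    deleteAt v k i = v (deleteIndex k i) := rfl

@[simp] lemma deleteIndex_zero : deleteIndex k 0 = k + 1 := by
  simp [deleteIndex]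

lemma deleteIndex_neg_one (hm : 2 ≤ m) : deleteIndex k (-1) = k - 1 := by
  have : NeZero (m - 1) := ⟨by omega⟩
  have h : (((-1 : ZMod (m - 1)).val + 2 : ℕ) : ZMod m) = 0 := by
    rw [show (-1 : ZMod (m - 1)).val + 2 = m by
      have := ZMod.val_neg_one_add_one (n := m - 1); omega, ZMod.natCast_self]
  push_cast at h
  simp only [deleteIndex]
  linear_combination h

lemma deleteIndex_add_one [NeZero (m - 1)] {i : ZMod (m - 1)} (hi : i ≠ -1) :
    deleteIndex k (i + 1) = deleteIndex k i + 1 := by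
  simp only [deleteIndex, ZMod.val_add_one_of_ne_neg_one hi]
  push_cast
  ring

lemma deleteIndex_sub_one [NeZero (m - 1)] {i : ZMod (m - 1)} (hi : i ≠ 0) :
    deleteIndex k (i - 1) = deleteIndex k i - 1 := by
  have := deleteIndex_add_one (k := k) (i := i - 1) (fun h => hi (by linear_combination h))
  rw [sub_add_cancel] at this
  rw [this, add_sub_cancel_right]

lemma deleteIndex_injective (hm : 2 ≤ m) : Function.Injective (deleteIndex (m := m) k) := by
  have : NeZero (m - 1) := ⟨by omega⟩
  intro i j h
  have h' := congrArg ZMod.val (add_left_cancel h)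
  rw [ZMod.val_cast_of_lt (by have := ZMod.val_lt i; omega),
    ZMod.val_cast_of_lt (by have := ZMod.val_lt j; omega)] at h'
  exact ZMod.val_injective _ h'

lemma deleteIndex_ne (hm : 2 ≤ m) (i : ZMod (m - 1)) : deleteIndex k i ≠ k := by
  have : NeZero (m - 1) := ⟨by omega⟩
  intro h
  have h' : ((i.val + 1 : ℕ) : ZMod m) = 0 := by
    push_cast
    simp only [deleteIndex] at h
    linear_combination h
  rw [ZMod.natCast_eq_zero_iff] at h'
  have := Nat.le_of_dvd (by omega) h'
  have := ZMod.val_lt i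
  omega

lemma exists_deleteIndex_eq (hm : 1 ≤ m) {j : ZMod m} (hj : j ≠ k) :
    ∃ i, deleteIndex k i = j := by
  have : NeZero m := ⟨by omega⟩
  have hlt : (j - k - 1).val < m - 1 := by
    refine lt_of_le_of_ne (Nat.le_sub_one_of_lt (ZMod.val_lt _)) fun h => hj ?_
    have := ZMod.natCast_zmod_val (j - k - 1)
    rw [h, Nat.cast_sub hm, ZMod.natCast_self] at this
    linear_combination -this
  refine ⟨((j - k - 1).val : ZMod (m - 1)), ?_⟩
  simp only [deleteIndex, ZMod.val_cast_of_lt hlt, ZMod.natCast_zmod_val]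
  ring

lemma deleteAt_add_one [NeZero (m - 1)] {i : ZMod (m - 1)} (hi : i ≠ -1) :
    deleteAt v k (i + 1) = v (deleteIndex k i + 1) := by
  rw [deleteAt_apply, deleteIndex_add_one hi]

lemma deleteAt_neg_one (hm : 2 ≤ m) : deleteAt v k (-1) = v (k - 1) := by
  rw [deleteAt_apply, deleteIndex_neg_one hm]

lemma deleteAt_zero : deleteAt v k 0 = v (k + 1) := by
  rw [deleteAt_apply, deleteIndex_zero]

lemma detZ_sub_one_add_one_of_eq_add (hsum : v k = v (k - 1) + v (k + 1)) :
    detZ (v (k - 1)) (v (k + 1)) = detZ (v (k - 1)) (v k) := by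
  rw [hsum, detZ_add_right, detZ_self, zero_add]

theorem IsCompleteFanData.deleteAt (hv : IsCompleteFanData m v) (hm : 4 ≤ m)
    (hsum : v k = v (k - 1) + v (k + 1)) : IsCompleteFanData (m - 1) (deleteAt v k) := by
  have : NeZero (m - 1) := ⟨by omega⟩
  have hmerge : _root_.deleteAt v k (-1 + 1) = v (k + 1) := by rw [neg_add_cancel, deleteAt_zero]
  have hne : ∀ i : ZMod (m - 1), i ≠ -1 → deleteIndex k i ≠ k - 1 := fun i hi h =>
    hi (deleteIndex_injective (by omega) (h.trans (deleteIndex_neg_one (by omega)).symm))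
  refine ⟨by omega, fun i => hv.gcd_eq_one _, fun i => ?_, ?_, fun i j hij => ?_⟩
  · obtain rfl | hi := eq_or_ne i (-1)
    · rw [deleteAt_neg_one (by omega), hmerge, detZ_sub_one_add_one_of_eq_add hsum]
      exact hv.detZ_sub_one_pos k
    · rw [deleteAt_add_one hi]
      exact hv.detZ_pos _
  · refine Set.eq_univ_of_univ_subset (hv.2.2.2.1 ▸ Set.iUnion_subset fun j => ?_)
    by_cases hj : j = k - 1 ∨ j = k
    · refine Set.subset_iUnion_of_subset (-1) ?_
      rw [deleteAt_neg_one (by omega), hmerge, coneOf_eq_union hsum]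
      rcases hj with rfl | rfl
      · rw [sub_add_cancel]
        exact Set.subset_union_left
      · exact Set.subset_union_right
    · obtain ⟨hj₁, hj₂⟩ := not_or.1 hj
      obtain ⟨i, rfl⟩ := exists_deleteIndex_eq (by omega) hj₂
      have hi : i ≠ -1 := by
        rintro rfl
        exact hj₁ (deleteIndex_neg_one (by omega))
      refine Set.subset_iUnion_of_subset i ?_
      rw [deleteAt_apply, deleteAt_add_one hi]
  · have merge_inter : ∀ i : ZMod (m - 1), i ≠ -1 →
        interior (coneOf (_root_.deleteAt v k (-1)) (_root_.deleteAt v k (-1 + 1))) ∩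
          interior (coneOf (_root_.deleteAt v k i) (_root_.deleteAt v k (i + 1))) = ∅ := by
      intro i hi
      rw [deleteAt_neg_one (by omega), hmerge, deleteAt_apply, deleteAt_add_one hi]
      exact hv.interior_coneOf_merge_inter hsum (hne i hi) (deleteIndex_ne (by omega) i)
    obtain rfl | hi := eq_or_ne i (-1)
    · exact merge_inter j hij.symm
    obtain rfl | hj := eq_or_ne j (-1)
    · rw [Set.inter_comm]
      exact merge_inter i hi
    rw [deleteAt_apply, deleteAt_add_one hi, deleteAt_apply, deleteAt_add_one hj]
    exact hv.interior_inter_interior ((deleteIndex_injective (by omega)).ne hij)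

theorem IsLDPFanData.deleteAt (hv : IsLDPFanData m v) (hm : 4 ≤ m)
    (hsum : v k = v (k - 1) + v (k + 1)) : IsLDPFanData (m - 1) (deleteAt v k) := by
  have : Fact (1 < m - 1) := ⟨by omega⟩
  have h₀ : (0 : ZMod (m - 1)) ≠ -1 := (neg_ne_zero.2 one_ne_zero).symm
  refine ⟨hv.1.deleteAt hm hsum, fun i => ?_⟩
  have hf := hv.2
  simp only [fanF] at hf ⊢
  obtain rfl | hi := eq_or_ne i (-1)
  · -- `f` grows by `det(v_{k-2}, v_{k-1})` at `v_{k-1}`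
    have := hf (k - 1)
    rw [sub_add_cancel, hsum] at this
    rw [deleteAt_apply, deleteIndex_sub_one h₀.symm, deleteIndex_neg_one (by omega),
      neg_add_cancel, deleteAt_apply, deleteIndex_neg_one (by omega), deleteAt_zero]
    have := hv.1.detZ_sub_one_pos (k - 1)
    simp only [detZ_add_left, detZ_add_right, detZ_self] at *
    linarith [detZ_anticomm (v (k - 1)) (v (k - 1 - 1))]
  obtain rfl | hi₀ := eq_or_ne i 0
  · -- `f` grows by `det(v_{k+1}, v_{k+2})` at `v_{k+1}`
    have := hf (k + 1)
    rw [add_sub_cancel_right, hsum] at this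
    rw [zero_sub, deleteAt_neg_one (by omega), deleteAt_add_one h₀, deleteAt_zero,
      deleteIndex_zero]
    have := hv.1.detZ_pos (k + 1)
    simp only [detZ_add_left, detZ_add_right, detZ_self] at *
    linarith [detZ_anticomm (v (k + 1)) (v (k + 1 + 1))]
  · rw [deleteAt_apply, deleteIndex_sub_one hi₀, deleteAt_apply, deleteAt_add_one hi]
    exact hf _

theorem numSingular_deleteAt (hm : 2 ≤ m) (hsum : v k = v (k - 1) + v (k + 1))
    (h₁ : detZ (v (k - 1)) (v k) = 1) (h₂ : detZ (v k) (v (k + 1)) = 1) :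
    numSingular (m - 1) (deleteAt v k) = numSingular m v := by
  have : NeZero (m - 1) := ⟨by omega⟩
  have hpre : {i | 2 ≤ detZ (deleteAt v k i) (deleteAt v k (i + 1))} =
      deleteIndex k ⁻¹' {j | 2 ≤ detZ (v j) (v (j + 1))} := by
    ext i
    obtain rfl | hi := eq_or_ne i (-1)
    · simp [deleteAt_neg_one hm, deleteAt_zero, deleteIndex_neg_one hm,
        detZ_sub_one_add_one_of_eq_add hsum, h₁]
    · show 2 ≤ detZ (deleteAt v k i) (deleteAt v k (i + 1)) ↔
        2 ≤ detZ (v (deleteIndex k i)) (v (deleteIndex k i + 1))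
      rw [deleteAt_add_one hi, deleteAt_apply]
  rw [numSingular, hpre, Set.ncard_preimage_of_injective_subset_range (deleteIndex_injective hm)]
  · rfl
  · rintro j hj
    refine exists_deleteIndex_eq (by omega) fun h => ?_
    subst h
    simp [h₂] at hj

end deleteAt

/-! The configurations left for `d = 5, 6`, in the basis `v_{k-1} = (1, 0)`, `v_k = (0, 1)` at a
wide ray `v_k`. -/

lemma false_of_pentagon_two_wide (w₃ w₄ w₅ : ℤ × ℤ)
    (h₂₃ : detZ (0, 1) w₃ = 1) (h₃₄ : detZ w₃ w₄ = 1) (h₅₁ : 2 ≤ detZ w₅ (1, 0))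
    (hw₂ : detZ (1, 0) w₃ ≤ 0) (hw₃ : detZ (0, 1) w₄ ≤ 0) (h₅₂ : 1 ≤ detZ w₅ (0, 1))
    (f₁ : 1 ≤ detZ w₅ (1, 0) + detZ (1, 0) (0, 1) + detZ (0, 1) w₅)
    (f₄ : 1 ≤ detZ w₃ w₄ + detZ w₄ w₅ + detZ w₅ w₃)
    (hw₅ : Int.gcd w₅.1 w₅.2 = 1) : False := by
  obtain ⟨x₃, y₃⟩ := w₃
  obtain ⟨x₄, y₄⟩ := w₄
  obtain ⟨x₅, y₅⟩ := w₅
  simp only [detZ] at *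
  ring_nf at *
  obtain rfl : x₃ = -1 := by linarith
  obtain rfl : y₄ = -1 := by nlinarith
  -- `w₅` is forced onto the diagonal, so it is not primitive
  obtain rfl : x₅ = -y₅ := by
    rcases mul_eq_zero.1 (show y₃ * x₄ = 0 by linarith) with h | h <;> subst h <;> nlinarith
  simp at hw₅
  omega

lemma false_of_pentagon_one_wide (w₃ w₄ w₅ : ℤ × ℤ)
    (h₂₃ : detZ (0, 1) w₃ = 1) (h₃₄ : 2 ≤ detZ w₃ w₄) (h₄₅ : detZ w₄ w₅ = 1)
    (h₅₁ : 2 ≤ detZ w₅ (1, 0)) (hw₂ : detZ (1, 0) w₃ ≤ 0) (h₄₁ : 1 ≤ detZ w₄ (1, 0))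
    (f₄ : 1 ≤ detZ w₃ w₄ + detZ w₄ w₅ + detZ w₅ w₃)
    (f₅ : 1 ≤ detZ w₄ w₅ + detZ w₅ (1, 0) + detZ (1, 0) w₄) : False := by
  obtain ⟨x₃, c⟩ := w₃
  obtain ⟨a, b⟩ := w₄
  obtain ⟨p, r⟩ := w₅
  simp only [detZ] at *
  ring_nf at *
  obtain rfl : x₃ = -1 := by linarith
  ring_nf at *
  have hrb : r < b := by
    refine lt_of_le_of_ne (by linarith) fun hrb => ?_
    subst hrb
    have := Int.eq_one_or_neg_one_of_mul_eq_one (show r * (a - p) = 1 by linarith)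
    omega
  have hc : c < 0 := by nlinarith
  have hpa : p < a := by nlinarith
  have hp : p < 0 := by nlinarith
  have ha : a < 0 := by nlinarith
  nlinarith

lemma false_of_hexagon_two_wide (w₃ w₄ w₅ w₆ : ℤ × ℤ)
    (h₂₃ : detZ (0, 1) w₃ = 1) (h₃₄ : detZ w₃ w₄ = 1) (h₅₆ : detZ w₅ w₆ = 1)
    (hw₂ : detZ (1, 0) w₃ ≤ 0) (hw₃ : detZ (0, 1) w₄ ≤ 0)
    (h₁₄ : detZ (1, 0) w₄ ≤ 0) (h₂₅ : detZ (0, 1) w₅ ≤ 0)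
    (h₅₁ : 1 ≤ detZ w₅ (1, 0)) (h₆₂ : 1 ≤ detZ w₆ (0, 1))
    (f₁ : 1 ≤ detZ w₆ (1, 0) + detZ (1, 0) (0, 1) + detZ (0, 1) w₆)
    (f₄ : 1 ≤ detZ w₃ w₄ + detZ w₄ w₅ + detZ w₅ w₃) : False := by
  obtain ⟨x₃, c⟩ := w₃
  obtain ⟨x₄, y₄⟩ := w₄
  obtain ⟨x₅, y₅⟩ := w₅
  obtain ⟨x₆, y₆⟩ := w₆
  simp only [detZ] at *
  ring_nf at *
  obtain rfl : x₃ = -1 := by linarith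
  ring_nf at *
  obtain rfl | rfl : y₄ = 0 ∨ y₄ = -1 := by
    have : 0 ≤ -(c * x₄) := by nlinarith
    omega
  · nlinarith
  have h₆ : 1 ≤ x₆ * (-x₅ - y₅) := by nlinarith
  have hxy : 1 ≤ -x₅ - y₅ := by
    by_contra h
    nlinarith [mul_nonpos_of_nonneg_of_nonpos (by linarith : (0 : ℤ) ≤ x₆)
      (by linarith : -x₅ - y₅ ≤ 0)]
  rcases mul_eq_zero.1 (show c * x₄ = 0 by linarith) with h | h <;> subst h
  · nlinarith [mul_nonpos_of_nonneg_of_nonpos (by linarith : (0 : ℤ) ≤ x₄) (by linarith : y₅ ≤ 0)]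
  · nlinarith [mul_nonpos_of_nonneg_of_nonpos (by linarith : (0 : ℤ) ≤ x₅) hw₂]

theorem IsCompleteFanData.false_of_seven_le_length {m : ℕ} {v : ZMod m → ℤ × ℤ}
    (hv : IsCompleteFanData m v) (hm : 7 ≤ m)
    {p q : ZMod m} (hsmooth : ∀ i, i ≠ p → i ≠ q → detZ (v i) (v (i + 1)) = 1)
    (hwide : ∀ k, detZ (v (k - 1)) (v k) = 1 → detZ (v k) (v (k + 1)) = 1 →
      detZ (v (k - 1)) (v (k + 1)) ≤ 0) : False := by
  have : NeZero m := ⟨by omega⟩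
  set S := ([p, p + 1, q, q + 1].toFinset)ᶜ
  have hS : 2 < S.card := by
    have := List.toFinset_card_le [p, p + 1, q, q + 1]
    rw [Finset.card_compl, ZMod.card]
    simp only [List.length_cons, List.length_nil] at this
    omega
  have wide : ∀ x ∈ S, detZ (v (x - 1)) (v (x + 1)) ≤ 0 := by
    intro x hx
    simp only [S, Finset.mem_compl, List.mem_toFinset, List.mem_cons, List.not_mem_nil,
      or_false, not_or] at hx
    obtain ⟨hp, hp₁, hq, hq₁⟩ := hx
    refine hwide x ?_ (hsmooth x hp hq)
    simpa using hsmooth (x - 1) (fun h => hp₁ (by rw [← h, sub_add_cancel]))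
      (fun h => hq₁ (by rw [← h, sub_add_cancel]))
  obtain ⟨a, ha, b, hb, c, hc, hab, hac, hbc⟩ := Finset.two_lt_card.1 hS
  have adj := fun x y (hx : x ∈ S) (hy : y ∈ S) =>
    hv.adjacent_of_wide (by omega) (wide x hx) (wide y hy)
  exact ZMod.false_of_pairwise_adjacent (by omega) hab hac hbc (adj a b ha hb) (adj a c ha hc)
    (adj b c hb hc)

theorem IsLDPFanData.false_of_length_five {v : ZMod 5 → ℤ × ℤ} (hv : IsLDPFanData 5 v) {r : ZMod 5}
    (hr : r = 1 ∨ r = 2) (hsing : ∀ i, 2 ≤ detZ (v i) (v (i + 1)) ↔ i = 0 ∨ i = r)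
    (hwide : ∀ k, detZ (v (k - 1)) (v k) = 1 → detZ (v k) (v (k + 1)) = 1 →
      detZ (v (k - 1)) (v (k + 1)) ≤ 0) : False := by
  have smooth : ∀ i, i ≠ 0 → i ≠ r → detZ (v i) (v (i + 1)) = 1 := fun i h₀ hr => by
    have := hv.1.detZ_pos i
    have := (hsing i).not.2 (by tauto)
    omega
  have not_wide := fun k l => hv.1.one_le_detZ_of_not_adjacent (by norm_num) (k := k) (l := l)
  rcases hr with rfl | rfl
  · have h₂ : detZ (v 2) (v 3) = 1 := smooth 2 (by decide) (by decide)
    have h₃ : detZ (v 3) (v 4) = 1 := smooth 3 (by decide) (by decide)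
    have h₄ : detZ (v 4) (v 0) = 1 := smooth 4 (by decide) (by decide)
    obtain ⟨u, hu₂, hu₃, hu, hgcd⟩ := exists_standard_coords v h₂
    have key := false_of_pentagon_two_wide (u 4) (u 0) (u 1) (hw₅ := hgcd 1 (hv.1.gcd_eq_one 1))
    simp only [← hu₂, ← hu₃, hu] at key
    exact key h₃ h₄ ((hsing 1).2 (Or.inr rfl)) (hwide 3 h₂ h₃) (hwide 4 h₃ h₄)
      (not_wide 4 2 (hwide 4 h₃ h₄) (by decide)) (hv.2 2) (hv.2 0)
  · have h₁ : detZ (v 1) (v 2) = 1 := smooth 1 (by decide) (by decide)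
    have h₃ : detZ (v 3) (v 4) = 1 := smooth 3 (by decide) (by decide)
    have h₄ : detZ (v 4) (v 0) = 1 := smooth 4 (by decide) (by decide)
    obtain ⟨u, hu₃, hu₄, hu, -⟩ := exists_standard_coords v h₃
    have key := false_of_pentagon_one_wide (u 0) (u 1) (u 2)
    simp only [← hu₃, ← hu₄, hu] at key
    exact key h₄ ((hsing 0).2 (Or.inl rfl)) h₁ ((hsing 2).2 (Or.inr rfl)) (hwide 4 h₃ h₄)
      (not_wide 4 2 (hwide 4 h₃ h₄) (by decide)) (hv.2 1) (hv.2 2)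

theorem IsLDPFanData.false_of_length_six {v : ZMod 6 → ℤ × ℤ} (hv : IsLDPFanData 6 v) {r : ZMod 6}
    (hr : r = 1 ∨ r = 2 ∨ r = 3) (hsing : ∀ i, 2 ≤ detZ (v i) (v (i + 1)) ↔ i = 0 ∨ i = r)
    (hwide : ∀ k, detZ (v (k - 1)) (v k) = 1 → detZ (v k) (v (k + 1)) = 1 →
      detZ (v (k - 1)) (v (k + 1)) ≤ 0) : False := by
  have smooth : ∀ i, i ≠ 0 → i ≠ r → detZ (v i) (v (i + 1)) = 1 := fun i h₀ hr => by
    have := hv.1.detZ_pos i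
    have := (hsing i).not.2 (by tauto)
    omega
  have not_wide := fun k l => hv.1.one_le_detZ_of_not_adjacent (by norm_num) (k := k) (l := l)
  rcases hr with rfl | rfl | rfl
  · exact absurd (hv.1.adjacent_of_wide (k := 3) (l := 5) (by norm_num)
      (hwide 3 (smooth 2 (by decide) (by decide)) (smooth 3 (by decide) (by decide)))
      (hwide 5 (smooth 4 (by decide) (by decide)) (smooth 5 (by decide) (by decide)))) (by decide)
  · have h₁ : detZ (v 1) (v 2) = 1 := smooth 1 (by decide) (by decide)
    have h₃ : detZ (v 3) (v 4) = 1 := smooth 3 (by decide) (by decide)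
    have h₄ : detZ (v 4) (v 5) = 1 := smooth 4 (by decide) (by decide)
    have h₅ : detZ (v 5) (v 0) = 1 := smooth 5 (by decide) (by decide)
    have w₄ : detZ (v 3) (v 5) ≤ 0 := hwide 4 h₃ h₄
    have w₅ : detZ (v 4) (v 0) ≤ 0 := hwide 5 h₄ h₅
    obtain ⟨u, hu₃, hu₄, hu, -⟩ := exists_standard_coords v h₃
    have key := false_of_hexagon_two_wide (u 5) (u 0) (u 1) (u 2)
    simp only [← hu₃, ← hu₄, hu] at key
    exact key h₄ h₅ h₁ w₄ w₅ (hv.1.detZ_le_zero_of_wide (k := 4) w₄ (j := 0) (by decide))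
      (hv.1.detZ_le_zero_of_wide (k := 5) w₅ (j := 1) (by decide)) (not_wide 4 2 w₄ (by decide))
      (not_wide 5 3 w₅ (by decide)) (hv.2 3) (hv.2 0)
  · exact absurd (hv.1.adjacent_of_wide (k := 2) (l := 5) (by norm_num)
      (hwide 2 (smooth 1 (by decide) (by decide)) (smooth 2 (by decide) (by decide)))
      (hwide 5 (smooth 4 (by decide) (by decide)) (smooth 5 (by decide) (by decide)))) (by decide)

theorem IsLDPFanData.false_of_length_le_six {m : ℕ} {v : ZMod m → ℤ × ℤ} (hv : IsLDPFanData m v)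
    (hm : 5 ≤ m) (hm₆ : m ≤ 6)
    {p q : ZMod m} (hpq : p ≠ q) (hsing : ∀ i, 2 ≤ detZ (v i) (v (i + 1)) ↔ i = p ∨ i = q)
    (hwide : ∀ k, detZ (v (k - 1)) (v k) = 1 → detZ (v k) (v (k + 1)) = 1 →
      detZ (v (k - 1)) (v (k + 1)) ≤ 0) : False := by
  have : NeZero m := ⟨by omega⟩
  wlog h : (q - p).val ≤ m / 2 generalizing p q
  · refine this hpq.symm (fun i => (hsing i).trans or_comm) ?_
    rw [← neg_sub, ZMod.neg_val, if_neg (sub_ne_zero.2 hpq.symm)]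
    omega
  -- rotate the data so that `σ₀` is singular
  have hsing' : ∀ i, 2 ≤ detZ (v (i + p)) (v (i + 1 + p)) ↔ i = 0 ∨ i = q - p := fun i => by
    rw [add_right_comm i 1 p, hsing, add_eq_right, ← eq_sub_iff_add_eq]
  have hwide' : ∀ k, detZ (v (k - 1 + p)) (v (k + p)) = 1 → detZ (v (k + p)) (v (k + 1 + p)) = 1 →
      detZ (v (k - 1 + p)) (v (k + 1 + p)) ≤ 0 := fun k h₁ h₂ => by
    rw [sub_add_eq_add_sub] at h₁ ⊢
    rw [add_right_comm k 1 p] at h₂ ⊢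
    exact hwide _ h₁ h₂
  have hr : q - p ≠ 0 := sub_ne_zero.2 hpq.symm
  generalize q - p = r at hsing' hr h
  obtain rfl | rfl : m = 5 ∨ m = 6 := by omega
  · exact (hv.comp_add_right p).false_of_length_five
      ((by decide : ∀ r : ZMod 5, r ≠ 0 → r.val ≤ 5 / 2 → r = 1 ∨ r = 2) r hr h) hsing' hwide'
  · exact (hv.comp_add_right p).false_of_length_six
      ((by decide : ∀ r : ZMod 6, r ≠ 0 → r.val ≤ 6 / 2 → r = 1 ∨ r = 2 ∨ r = 3) r hr h)
      hsing' hwide'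

theorem IsLDPFanData.exists_blowdown_of_numSingular_eq_two {m : ℕ} {v : ZMod m → ℤ × ℤ}
    (hv : IsLDPFanData m v) (hm : 5 ≤ m) (hs : numSingular m v = 2) :
    ∃ k, v k = v (k - 1) + v (k + 1) ∧ detZ (v (k - 1)) (v k) = 1 ∧ detZ (v k) (v (k + 1)) = 1 := by
  by_contra! hno
  have hwide : ∀ k, detZ (v (k - 1)) (v k) = 1 → detZ (v k) (v (k + 1)) = 1 →
      detZ (v (k - 1)) (v (k + 1)) ≤ 0 := by
    intro k h₁ h₂
    have hf : 1 ≤ fanF m v k := hv.2 k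
    have : detZ (v (k - 1)) (v (k + 1)) ≠ 1 := fun h₃ =>
      hno k (eq_add_of_detZ_eq_one h₁ h₂ h₃) h₁ h₂
    rw [fanF, h₁, h₂, detZ_anticomm] at hf
    omega
  obtain ⟨p, q, hpq, hset⟩ := Set.ncard_eq_two.1 hs
  have hsing : ∀ i, 2 ≤ detZ (v i) (v (i + 1)) ↔ i = p ∨ i = q := fun i => Set.ext_iff.1 hset i
  rcases le_or_gt 7 m with hm₇ | hm₆
  · refine hv.1.false_of_seven_le_length hm₇ (p := p) (q := q) (fun i hp hq => ?_) hwide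
    have := hv.1.detZ_pos i
    have := (hsing i).not.2 (by tauto)
    omega
  · exact hv.false_of_length_le_six hm (by omega) hpq hsing hwide

/-- LDP fan data of length `d ≥ 4` with exactly two singular cones blows down,
through LDP fan data with exactly two singular cones, to data of length 4. -/
theorem two_singular_blowdown_chain (d : ℕ) (v : ZMod d → ℤ × ℤ)
    (hd : 4 ≤ d) (h : IsLDPFanData d v) (hs : numSingular d v = 2) :
    ∃ V : (m : ℕ) → (ZMod m → ℤ × ℤ),
      V d = v ∧
      (∀ m, 4 ≤ m → m ≤ d → IsLDPFanData m (V m) ∧ numSingular m (V m) = 2) ∧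
      (∀ m, 5 ≤ m → m ≤ d → ∃ k : ZMod m,
        V m k = V m (k - 1) + V m (k + 1) ∧
        detZ (V m (k - 1)) (V m k) = 1 ∧
        detZ (V m k) (V m (k + 1)) = 1 ∧
        V (m - 1) = deleteAt (V m) k) := by
  induction d, hd using Nat.le_induction with
  | base =>
    refine ⟨Function.update (fun _ _ => 0) 4 v, by simp, fun m hm hm' => ?_, fun m hm hm' => ?_⟩
    · obtain rfl : m = 4 := by omega
      simpa using ⟨h, hs⟩
    · omega
  | succ d hd ih =>
    obtain ⟨k, hsum, h₁, h₂⟩ := h.exists_blowdown_of_numSingular_eq_two (by omega) hs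
    obtain ⟨V, hVd, hV, hchain⟩ := ih (deleteAt v k) (h.deleteAt (by omega) hsum)
      ((numSingular_deleteAt (by omega) hsum h₁ h₂).trans hs)
    refine ⟨Function.update V (d + 1) v, by simp, fun m hm hm' => ?_, fun m hm hm' => ?_⟩
    · obtain rfl | hm' := eq_or_lt_of_le hm'
      · simpa using ⟨h, hs⟩
      · simpa [hm'.ne] using hV m hm (by omega)
    · obtain rfl | hm' := eq_or_lt_of_le hm'
      · refine ⟨k, by simpa using hsum, by simpa using h₁, by simpa using h₂, ?_⟩
        simpa using hVd
      · simpa [hm'.ne, (show m - 1 ≠ d + 1 by omega)] using hchain m hm (by omega)
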